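/- arXiv:1803.08293 — 6 statements merged into one kernel-verified Lean document; each statement's English description precedes it below -/
import Mathlib

section
/- Let ξ, ξ1, ξ2, ... be i.i.d. real random variables with E(ξ²) < ∞ and E(ξ) > 0, and let X_n = ξ1 + ... + ξ_n. Then E[X_n⁻] → 0 as n → ∞, where X_n⁻ = max(−X_n, 0) is the negative part. -/
/-!
Truncate each `ξ i` at a level `M` and center both pieces: `X_n = W_n + V_n + n m` with `m = 𝔼 ξ`,
where `W_n` is a sum of bounded centered variables and `V_n` a sum of centered tails. If
`X_n < 0`, then `W_n ≤ -n m / 2` or `V_n ≤ -n m / 2`, so `X_n⁻ ≤ W_n⁴ / c³ + V_n² / c` with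
`c = n m / 2`. Independence gives `𝔼 W_n⁴ = O(n²)` and `𝔼 V_n² ≤ n 𝔼 (ξ - truncation ξ M)²`,
hence `𝔼 X_n⁻ ≤ C_M / n + 2 𝔼 (ξ - truncation ξ M)² / m`, and the last term is small for large `M`.
-/

open MeasureTheory ProbabilityTheory Filter

lemma max_neg_add_le_sq_div {v c : ℝ} (hc : 0 < c) : max (-(v + c)) 0 ≤ v ^ 2 / c := by
  rw [le_div_iff₀ hc]
  rcases le_total 0 (v + c) with h | h
  · rw [max_eq_right (by linarith), zero_mul]; positivity
  · rw [max_eq_left (by linarith)]; nlinarith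

lemma max_neg_add_le_pow_four_div {w c : ℝ} (hc : 0 < c) :
    max (-(w + c)) 0 ≤ w ^ 4 / c ^ 3 := by
  rw [le_div_iff₀ (by positivity)]
  rcases le_total 0 (w + c) with h | h
  · rw [max_eq_right (by linarith), zero_mul]; positivity
  · rw [max_eq_left (by linarith)]
    have hcw : c ^ 3 ≤ (-w) ^ 3 := pow_le_pow_left₀ hc.le (by linarith) 3
    nlinarith [sq_nonneg w, sq_nonneg c]

lemma max_neg_add_add_two_mul_le {w v c : ℝ} (hc : 0 < c) :
    max (-(w + v + 2 * c)) 0 ≤ w ^ 4 / c ^ 3 + v ^ 2 / c := by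
  have hw := max_neg_add_le_pow_four_div (w := w) hc
  have hv := max_neg_add_le_sq_div (v := v) hc
  refine max_le ?_ (by positivity)
  linarith [le_max_left (-(w + c)) 0, le_max_left (-(v + c)) 0]

lemma tendsto_atTop_zero_of_le_div_add {f : ℕ → ℝ} (hf : ∀ n, 0 ≤ f n)
    (h : ∀ ε > 0, ∃ C, ∀ n, 0 < n → f n ≤ C / n + ε) : Tendsto f atTop (nhds 0) := by
  refine tendsto_order.2 ⟨fun a ha => Eventually.of_forall fun n => ha.trans_le (hf n),
    fun a ha => ?_⟩
  obtain ⟨C, hC⟩ := h (a / 2) (half_pos ha)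
  filter_upwards [(tendsto_const_div_atTop_nhds_zero_nat C).eventually_lt_const (half_pos ha),
    eventually_gt_atTop 0] with n hsmall hn
  linarith [hC n hn]

section Moments

variable {Ω : Type*} {mΩ : MeasurableSpace Ω} {μ : Measure Ω}

lemma MeasureTheory.MemLp.integrable_pow_of_le [IsFiniteMeasure μ] {X : Ω → ℝ} {p k : ℕ}
    (hX : MemLp X p μ) (hk : k ≤ p) : Integrable (fun ω => X ω ^ k) μ := by
  refine (hX.mono_exponent (by exact_mod_cast hk)).integrable_norm_pow'.mono'
    (hX.1.pow k) (Eventually.of_forall fun ω => ?_)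
  simp [norm_pow]

variable [IsProbabilityMeasure μ]

lemma ProbabilityTheory.IndepFun.integral_add_pow {X Y : Ω → ℝ} (hXY : IndepFun X Y μ) {p : ℕ}
    (hX : MemLp X p μ) (hY : MemLp Y p μ) :
    ∫ ω, (X ω + Y ω) ^ p ∂μ =
      ∑ k ∈ Finset.range (p + 1), (∫ ω, X ω ^ k ∂μ) * (∫ ω, Y ω ^ (p - k) ∂μ) * p.choose k := by
  have hpow : ∀ k ∈ Finset.range (p + 1), IndepFun (fun ω => X ω ^ k) (fun ω => Y ω ^ (p - k)) μ :=
    fun k _ => hXY.comp (measurable_id.pow_const k) (measurable_id.pow_const (p - k))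
  simp_rw [add_pow]
  rw [integral_finsetSum]
  · refine Finset.sum_congr rfl fun k hk => ?_
    rw [integral_mul_const, (hpow k hk).integral_fun_mul_eq_mul_integral
      (hX.integrable_pow_of_le (Finset.mem_range_succ_iff.mp hk)).1
      (hY.integrable_pow_of_le (Nat.sub_le p k)).1]
  · intro k hk
    exact ((hpow k hk).integrable_mul (hX.integrable_pow_of_le (Finset.mem_range_succ_iff.mp hk))
      (hY.integrable_pow_of_le (Nat.sub_le p k))).mul_const _

lemma ProbabilityTheory.IndepFun.integral_add_pow_four {X Y : Ω → ℝ} (hXY : IndepFun X Y μ)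
    (hX : MemLp X 4 μ) (hY : MemLp Y 4 μ) (hX0 : ∫ ω, X ω ∂μ = 0) (hY0 : ∫ ω, Y ω ∂μ = 0) :
    ∫ ω, (X ω + Y ω) ^ 4 ∂μ =
      ∫ ω, X ω ^ 4 ∂μ + 6 * (∫ ω, X ω ^ 2 ∂μ) * (∫ ω, Y ω ^ 2 ∂μ) + ∫ ω, Y ω ^ 4 ∂μ := by
  rw [hXY.integral_add_pow (by exact_mod_cast hX) (by exact_mod_cast hY)]
  simp only [Nat.reduceAdd, Finset.sum_range_succ, Finset.range_one, Finset.sum_singleton,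
    pow_zero, integral_const, probReal_univ, smul_eq_mul, mul_one, tsub_zero, one_mul, Nat.choose,
    Nat.cast_one, pow_one, hX0, Nat.add_one_sub_one, zero_mul, add_zero, Nat.cast_ofNat,
    Nat.reduceSub, hY0, mul_zero, tsub_self]
  ring

lemma ProbabilityTheory.iIndepFun.integral_sum_sq {ι : Type*} {Y : ι → Ω → ℝ} (hY : iIndepFun Y μ)
    (hL2 : ∀ i, MemLp (Y i) 2 μ) (h0 : ∀ i, ∫ ω, Y i ω ∂μ = 0) (s : Finset ι) :
    ∫ ω, (∑ i ∈ s, Y i ω) ^ 2 ∂μ = ∑ i ∈ s, ∫ ω, Y i ω ^ 2 ∂μ := by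
  have hsum0 : ∫ ω, ∑ i ∈ s, Y i ω ∂μ = 0 := by
    rw [integral_finsetSum _ fun i _ => (hL2 i).integrable one_le_two]
    exact Finset.sum_eq_zero fun i _ => h0 i
  have hvar := IndepFun.variance_sum (fun i _ => hL2 i)
    (fun i _ j _ hij => hY.indepFun hij) (s := s)
  rw [variance_of_integral_eq_zero (Finset.aemeasurable_sum _ fun i _ => (hL2 i).1.aemeasurable)
    (by simpa using hsum0)] at hvar
  simpa [variance_of_integral_eq_zero (hL2 _).1.aemeasurable (h0 _)] using hvar

lemma ProbabilityTheory.iIndepFun.integral_sum_range_pow_four_le {Y : ℕ → Ω → ℝ}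
    (hY : iIndepFun Y μ) (hL4 : ∀ i, MemLp (Y i) 4 μ) (h0 : ∀ i, ∫ ω, Y i ω ∂μ = 0)
    {s q : ℝ} (hs : ∀ i, ∫ ω, Y i ω ^ 2 ∂μ ≤ s) (hq : ∀ i, ∫ ω, Y i ω ^ 4 ∂μ ≤ q) (n : ℕ) :
    ∫ ω, (∑ i ∈ Finset.range n, Y i ω) ^ 4 ∂μ ≤ n * q + 3 * n ^ 2 * s ^ 2 := by
  have hL2 : ∀ i, MemLp (Y i) 2 μ := fun i => (hL4 i).mono_exponent (by norm_num)
  induction n with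
  | zero => simp
  | succ n ih =>
    have hindep : IndepFun (fun ω => ∑ i ∈ Finset.range n, Y i ω) (Y n) μ := by
      simpa [Finset.sum_fn] using hY.indepFun_sum_range_succ₀ (fun i => (hL4 i).1.aemeasurable) n
    have hsum0 : ∫ ω, ∑ i ∈ Finset.range n, Y i ω ∂μ = 0 := by
      rw [integral_finsetSum _ fun i _ => (hL2 i).integrable one_le_two]
      exact Finset.sum_eq_zero fun i _ => h0 i
    have hsq : ∫ ω, (∑ i ∈ Finset.range n, Y i ω) ^ 2 ∂μ ≤ n * s := by
      rw [hY.integral_sum_sq hL2 h0]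
      simpa using Finset.sum_le_sum fun i (_ : i ∈ Finset.range n) => hs i
    have hs0 : 0 ≤ s := (integral_nonneg fun ω => sq_nonneg (Y 0 ω)).trans (hs 0)
    have hcross := mul_le_mul hsq (hs n) (integral_nonneg fun ω => sq_nonneg _)
      (by positivity)
    simp_rw [Finset.sum_range_succ]
    rw [hindep.integral_add_pow_four (memLp_finsetSum _ fun i _ => hL4 i) (hL4 n) hsum0 (h0 n)]
    push_cast
    nlinarith [hq n]

lemma integral_max_neg_sum_le {ξ Y Z : ℕ → Ω → ℝ} {m : ℝ} (hm : 0 < m)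
    (hdecomp : ∀ i ω, ξ i ω = Y i ω + Z i ω + m)
    (hY : iIndepFun Y μ) (hYL4 : ∀ i, MemLp (Y i) 4 μ) (hY0 : ∀ i, ∫ ω, Y i ω ∂μ = 0)
    {s q : ℝ} (hs : ∀ i, ∫ ω, Y i ω ^ 2 ∂μ ≤ s) (hq : ∀ i, ∫ ω, Y i ω ^ 4 ∂μ ≤ q)
    (hZ : iIndepFun Z μ) (hZL2 : ∀ i, MemLp (Z i) 2 μ) (hZ0 : ∀ i, ∫ ω, Z i ω ∂μ = 0)
    {δ : ℝ} (hδ : ∀ i, ∫ ω, Z i ω ^ 2 ∂μ ≤ δ) {n : ℕ} (hn : 0 < n) :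
    ∫ ω, max (-(∑ i ∈ Finset.range n, ξ i ω)) 0 ∂μ ≤
      8 * (q + 3 * s ^ 2) / m ^ 3 / n + 2 * δ / m := by
  set W : Ω → ℝ := fun ω => ∑ i ∈ Finset.range n, Y i ω
  set V : Ω → ℝ := fun ω => ∑ i ∈ Finset.range n, Z i ω
  set c : ℝ := n * m / 2
  have hc : 0 < c := by positivity
  have hsum : ∀ ω, ∑ i ∈ Finset.range n, ξ i ω = W ω + V ω + 2 * c := fun ω => by
    simp only [hdecomp, Finset.sum_add_distrib, Finset.sum_const, Finset.card_range,
      nsmul_eq_mul, W, V, c]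
    ring
  have hW4 : Integrable (fun ω => W ω ^ 4) μ :=
    MemLp.integrable_pow_of_le (p := 4)
      (by exact_mod_cast memLp_finsetSum _ fun i _ => hYL4 i) le_rfl
  have hV2 : Integrable (fun ω => V ω ^ 2) μ := (memLp_finsetSum _ fun i _ => hZL2 i).integrable_sq
  have hWmom := hY.integral_sum_range_pow_four_le hYL4 hY0 hs hq n
  have hVmom : ∫ ω, V ω ^ 2 ∂μ ≤ n * δ := by
    rw [hZ.integral_sum_sq hZL2 hZ0]
    simpa using Finset.sum_le_sum fun i (_ : i ∈ Finset.range n) => hδ i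
  have hq0 : 0 ≤ q := (integral_nonneg fun ω => by positivity).trans (hq 0)
  calc ∫ ω, max (-(∑ i ∈ Finset.range n, ξ i ω)) 0 ∂μ
      ≤ ∫ ω, (W ω ^ 4 / c ^ 3 + V ω ^ 2 / c) ∂μ := by
        refine integral_mono_of_nonneg (Eventually.of_forall fun ω => le_max_right _ _)
          ((hW4.div_const _).add (hV2.div_const _)) (Eventually.of_forall fun ω => ?_)
        simpa only [hsum] using max_neg_add_add_two_mul_le hc
    _ = (∫ ω, W ω ^ 4 ∂μ) / c ^ 3 + (∫ ω, V ω ^ 2 ∂μ) / c := by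
        rw [integral_add (hW4.div_const _) (hV2.div_const _), integral_div, integral_div]
    _ ≤ (n * q + 3 * n ^ 2 * s ^ 2) / c ^ 3 + n * δ / c := by gcongr
    _ ≤ 8 * (q + 3 * s ^ 2) / m ^ 3 / n + 2 * δ / m := by
        have hn1 : (1 : ℝ) ≤ n := by exact_mod_cast hn
        have : (n * q + 3 * n ^ 2 * s ^ 2) / c ^ 3 ≤ 8 * (q + 3 * s ^ 2) / m ^ 3 / n := by
          rw [div_div, div_le_div_iff₀ (by positivity) (by positivity)]
          simp only [c]
          nlinarith [mul_le_mul_of_nonneg_left hn1 (by positivity : 0 ≤ (n : ℝ) ^ 2 * q * m ^ 3)]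
        have : n * δ / c = 2 * δ / m := by simp only [c]; field_simp
        linarith

end Moments

section Truncation

variable {Ω : Type*} {mΩ : MeasurableSpace Ω} {μ : Measure Ω}

lemma abs_sub_truncation_le (f : Ω → ℝ) (A : ℝ) (ω : Ω) : |f ω - truncation f A ω| ≤ |f ω| := by
  simp only [truncation, Set.indicator, Function.comp_apply, id]
  split_ifs <;> simp

lemma tendsto_integral_sq_sub_truncation {f : Ω → ℝ} (hf : MemLp f 2 μ) :
    Tendsto (fun A => ∫ ω, (f ω - truncation f A ω) ^ 2 ∂μ) atTop (nhds 0) := by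
  rw [← integral_zero Ω ℝ]
  refine tendsto_integral_filter_of_dominated_convergence (fun ω => f ω ^ 2)
    (Eventually.of_forall fun A => ((hf.1.sub hf.1.truncation).pow 2)) ?_ hf.integrable_sq ?_
  · refine Eventually.of_forall fun A => Eventually.of_forall fun ω => ?_
    rw [Real.norm_eq_abs, abs_pow, ← sq_abs (f ω)]
    exact pow_le_pow_left₀ (abs_nonneg _) (abs_sub_truncation_le f A ω) 2
  · refine Eventually.of_forall fun ω => tendsto_const_nhds.congr' ?_
    filter_upwards [Ioi_mem_atTop |f ω|] with A hA
    rw [truncation_eq_self hA, sub_self, zero_pow two_ne_zero]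

end Truncation

section IID

variable {Ω : Type*} {mΩ : MeasurableSpace Ω} {μ : Measure Ω} [IsProbabilityMeasure μ]

lemma exists_integral_max_neg_sum_le {ξ : ℕ → Ω → ℝ} (hindep : iIndepFun ξ μ)
    (hident : ∀ i, IdentDistrib (ξ i) (ξ 0) μ μ) (hL2 : MemLp (ξ 0) 2 μ)
    (hmean : 0 < ∫ ω, ξ 0 ω ∂μ) (M : ℝ) :
    ∃ C, ∀ n, 0 < n → ∫ ω, max (-(∑ i ∈ Finset.range n, ξ i ω)) 0 ∂μ ≤
      C / n + 2 * (∫ ω, (ξ 0 ω - truncation (ξ 0) M ω) ^ 2 ∂μ) / ∫ ω, ξ 0 ω ∂μ := by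
  set m := ∫ ω, ξ 0 ω ∂μ
  set a := ∫ ω, truncation (ξ 0) M ω ∂μ
  set g : ℝ → ℝ := Set.indicator (Set.Ioc (-M) M) id
  have hg : Measurable g := measurable_id.indicator measurableSet_Ioc
  set Y : ℕ → Ω → ℝ := fun i ω => truncation (ξ i) M ω - a
  set Z : ℕ → Ω → ℝ := fun i ω => ξ i ω - truncation (ξ i) M ω - (m - a)
  have hYid : ∀ i, IdentDistrib (Y i) (Y 0) μ μ := fun i => (hident i).comp (hg.sub_const a)
  have hZid : ∀ i, IdentDistrib (Z i) (Z 0) μ μ := fun i =>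
    (hident i).comp ((measurable_id.sub hg).sub_const (m - a))
  have hξL2 : ∀ i, MemLp (ξ i) 2 μ := fun i => (hident i).symm.memLp_snd hL2
  have hYL4 : ∀ i, MemLp (Y i) 4 μ := fun i =>
    (hξL2 i).1.memLp_truncation.sub (memLp_const a)
  have hZL2 : ∀ i, MemLp (Z i) 2 μ := fun i =>
    ((hξL2 i).sub (hξL2 i).1.memLp_truncation).sub (memLp_const _)
  have hY0 : ∫ ω, Y 0 ω ∂μ = 0 := by
    simp [Y, integral_sub hL2.1.integrable_truncation (integrable_const a), a]
  have hZ0 : ∫ ω, Z 0 ω ∂μ = 0 := by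
    have hξint := hL2.integrable one_le_two
    simp only [Z]
    rw [integral_sub (f := fun ω => ξ 0 ω - truncation (ξ 0) M ω)
        (hξint.sub hL2.1.integrable_truncation) (integrable_const _),
      integral_sub hξint hL2.1.integrable_truncation, integral_const]
    simp [a, m]
  have hZsq : ∫ ω, Z 0 ω ^ 2 ∂μ ≤ ∫ ω, (ξ 0 ω - truncation (ξ 0) M ω) ^ 2 ∂μ := by
    have hXm : AEStronglyMeasurable (fun ω => ξ 0 ω - truncation (ξ 0) M ω) μ :=
      hL2.1.sub hL2.1.truncation
    calc ∫ ω, Z 0 ω ^ 2 ∂μ = Var[Z 0; μ] :=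
          (variance_of_integral_eq_zero (hZL2 0).1.aemeasurable hZ0).symm
      _ = Var[fun ω => ξ 0 ω - truncation (ξ 0) M ω; μ] := variance_sub_const hXm _
      _ ≤ _ := variance_le_expectation_sq hXm
  refine ⟨8 * (∫ ω, Y 0 ω ^ 4 ∂μ + 3 * (∫ ω, Y 0 ω ^ 2 ∂μ) ^ 2) / m ^ 3, fun n hn => ?_⟩
  refine integral_max_neg_sum_le (Y := Y) (Z := Z) hmean (fun i ω => by ring)
    (hindep.comp (fun _ x => g x - a) fun _ => hg.sub_const a) hYL4
    (fun i => (hYid i).integral_eq.trans hY0)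
    (fun i => ((hYid i).comp (measurable_id.pow_const 2)).integral_eq.le)
    (fun i => ((hYid i).comp (measurable_id.pow_const 4)).integral_eq.le)
    (hindep.comp (fun _ x => x - g x - (m - a)) fun _ => (measurable_id.sub hg).sub_const (m - a))
    hZL2
    (fun i => (hZid i).integral_eq.trans hZ0)
    (fun i => (((hZid i).comp (measurable_id.pow_const 2)).integral_eq.trans_le hZsq)) hn

end IID

theorem expectation_neg_part_tendsto_zero_general
    {Ω : Type*} [MeasureSpace Ω] [IsProbabilityMeasure (ℙ : Measure Ω)]
    (ξ : ℕ → Ω → ℝ)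
    (hindep : iIndepFun ξ ℙ)
    (hident : ∀ i, IdentDistrib (ξ i) (ξ 0) ℙ ℙ)
    (hL2 : MemLp (ξ 0) 2 ℙ)
    (hmean : 0 < ∫ ω, ξ 0 ω) :
    Tendsto (fun n => ∫ ω, max (-(∑ i ∈ Finset.range n, ξ i ω)) 0) atTop (nhds 0) := by
  refine tendsto_atTop_zero_of_le_div_add (fun n => integral_nonneg fun ω => le_max_right _ _)
    fun ε hε => ?_
  obtain ⟨M, hM⟩ := ((tendsto_integral_sq_sub_truncation hL2).eventually_lt_const
    (by positivity : 0 < ε * (∫ ω, ξ 0 ω) / 2)).exists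
  obtain ⟨C, hC⟩ := exists_integral_max_neg_sum_le hindep hident hL2 hmean M
  refine ⟨C, fun n hn => (hC n hn).trans ?_⟩
  gcongr
  rw [div_le_iff₀ hmean]
  linarith

/-- For i.i.d. real random variables with finite second moment and positive mean,
the expectation of the negative part of the partial sums tends to `0`. -/
theorem expectation_neg_part_tendsto_zero
    {Ω : Type*} [MeasureSpace Ω] [IsProbabilityMeasure (ℙ : Measure Ω)]
    (ξ : ℕ → Ω → ℝ)
    (hmeas : ∀ i, Measurable (ξ i))
    (hindep : iIndepFun ξ ℙ)
    (hident : ∀ i, IdentDistrib (ξ i) (ξ 0) ℙ ℙ)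
    (hL2 : MemLp (ξ 0) 2 ℙ)
    (hmean : 0 < ∫ ω, ξ 0 ω) :
    Tendsto (fun n => ∫ ω, max (-(∑ i ∈ Finset.range n, ξ i ω)) 0) atTop (nhds 0) :=
  expectation_neg_part_tendsto_zero_general ξ hindep hident hL2 hmean
end

section
/- Let Z, Z1, Z2, ... be i.i.d. random vectors in ℝ² with E‖Z‖ < ∞ and mean μ = E Z, and let L_n denote the perimeter of the convex hull of {0, S_1, ..., S_n}, where S_k = Z1 + ... + Z_k. Then L_n/n → 2‖μ‖ almost surely. -/
open MeasureTheory ProbabilityTheory Filter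
open scoped RealInnerProductSpace

/-- The unit vector in direction `θ`. -/
noncomputable def unitVec (θ : ℝ) : EuclideanSpace ℝ (Fin 2) :=
  (WithLp.equiv 2 (Fin 2 → ℝ)).symm ![Real.cos θ, Real.sin θ]

/-- The perimeter of the convex hull of the points `x 0, ..., x n`
(with `x 0 = 0`), via Cauchy's formula. -/
noncomputable def perimCauchy (n : ℕ) (x : ℕ → EuclideanSpace ℝ (Fin 2)) : ℝ :=
  ∫ θ in (0 : ℝ)..(2 * Real.pi),
    (Finset.range (n + 1)).sup' Finset.nonempty_range_add_one (fun k => ⟪x k, unitVec θ⟫)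

/-!
By Cauchy's formula the perimeter of the hull of `x 0, …, x n` moves by at most
`2π · maxₖ ‖x k - y k‖` when the points are moved from `x` to `y`, and for the points `k • μ`
(a segment of length `n‖μ‖`) it equals `2n‖μ‖`. The strong law of large numbers gives
`S k = k • μ + o(k)`, and the running maximum of an `o(k)` sequence is `o(n)`.
-/

open Real Finset

lemma inner_unitVec (v : EuclideanSpace ℝ (Fin 2)) (θ : ℝ) :
    ⟪v, unitVec θ⟫ = v 0 * cos θ + v 1 * sin θ := by
  simp [unitVec, PiLp.inner_apply, Fin.sum_univ_two, mul_comm]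

lemma norm_unitVec (θ : ℝ) : ‖unitVec θ‖ = 1 := by
  simp [EuclideanSpace.norm_eq, unitVec, Fin.sum_univ_two]

lemma continuous_inner_unitVec (v : EuclideanSpace ℝ (Fin 2)) :
    Continuous fun θ => ⟪v, unitVec θ⟫ := by
  simp_rw [inner_unitVec]
  fun_prop

lemma exists_inner_unitVec_eq_norm_mul_cos (v : EuclideanSpace ℝ (Fin 2)) :
    ∃ φ, ∀ θ, ⟪v, unitVec θ⟫ = ‖v‖ * cos (θ - φ) := by
  set z : ℂ := ⟨v 0, v 1⟩
  have hnorm : ‖v‖ = ‖z‖ := by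
    simp [EuclideanSpace.norm_eq, Complex.norm_def, Complex.normSq_mk, Fin.sum_univ_two, z, sq]
  have hre : ‖z‖ * cos z.arg = v 0 := Complex.norm_mul_cos_arg z
  have him : ‖z‖ * sin z.arg = v 1 := Complex.norm_mul_sin_arg z
  refine ⟨z.arg, fun θ => ?_⟩
  rw [inner_unitVec, cos_sub, hnorm]
  linear_combination (-cos θ) * hre - sin θ * him

lemma integral_max_cos_sub_zero (φ : ℝ) :
    ∫ θ in (0 : ℝ)..2 * π, max (cos (θ - φ)) 0 = 2 := by
  have hper : Function.Periodic (fun u => max (cos u) 0) (2 * π) := fun u => by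
    simp only [cos_add_two_pi]
  have hint (a b : ℝ) : IntervalIntegrable (fun u => max (cos u) 0) volume a b :=
    (continuous_cos.max continuous_const).intervalIntegrable a b
  have hpos : ∫ u in -(π / 2)..π / 2, max (cos u) 0 = 2 := by
    rw [intervalIntegral.integral_congr (g := cos) fun u hu => max_eq_left <|
      cos_nonneg_of_mem_Icc (by rwa [Set.uIcc_of_le (by linarith [pi_pos])] at hu), integral_cos]
    simp
    ring
  have hneg : ∫ u in π / 2..3 * π / 2, max (cos u) 0 = 0 := by
    rw [intervalIntegral.integral_congr (g := fun _ => (0 : ℝ)) fun u hu => max_eq_right ?_]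
    · simp
    rw [Set.uIcc_of_le (by linarith [pi_pos])] at hu
    exact cos_nonpos_of_pi_div_two_le_of_le hu.1 (by linarith [hu.2])
  rw [intervalIntegral.integral_comp_sub_right (fun u => max (cos u) 0),
    show 2 * π - φ = 0 - φ + 2 * π by ring, hper.intervalIntegral_add_eq (0 - φ) (-(π / 2)),
    show -(π / 2) + 2 * π = 3 * π / 2 by ring,
    ← intervalIntegral.integral_add_adjacent_intervals (hint _ (π / 2)) (hint _ _), hpos, hneg,
    add_zero]

lemma integral_max_inner_unitVec (v : EuclideanSpace ℝ (Fin 2)) :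
    ∫ θ in (0 : ℝ)..2 * π, max ⟪v, unitVec θ⟫ 0 = 2 * ‖v‖ := by
  obtain ⟨φ, hφ⟩ := exists_inner_unitVec_eq_norm_mul_cos v
  have hmax (θ : ℝ) : max (‖v‖ * cos (θ - φ)) 0 = ‖v‖ * max (cos (θ - φ)) 0 := by
    rw [mul_max_of_nonneg _ _ (norm_nonneg v), mul_zero]
  simp_rw [hφ, hmax]
  rw [intervalIntegral.integral_const_mul, integral_max_cos_sub_zero, mul_comm]

lemma Finset.sup'_range_natCast_mul (n : ℕ) (c : ℝ) :
    (range (n + 1)).sup' nonempty_range_add_one (fun k => (k : ℝ) * c) = n * max c 0 := by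
  refine le_antisymm (sup'_le _ _ fun k hk => ?_) ?_
  · have hkn : (k : ℝ) ≤ n := by exact_mod_cast Nat.lt_succ_iff.mp (mem_range.mp hk)
    calc (k : ℝ) * c ≤ k * max c 0 := by gcongr; exact le_max_left c 0
      _ ≤ n * max c 0 := by gcongr
  · rcases max_choice c 0 with h | h <;> rw [h]
    · exact le_sup' (fun k : ℕ => (k : ℝ) * c) (self_mem_range_succ n)
    · rw [mul_zero]
      exact le_sup'_of_le _ (mem_range.mpr n.succ_pos) (by simp)

lemma Finset.abs_sup'_sub_sup'_le {ι α : Type*} [AddCommGroup α] [LinearOrder α]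
    [IsOrderedAddMonoid α] {s : Finset ι} (hs : s.Nonempty) (f g : ι → α) :
    |s.sup' hs f - s.sup' hs g| ≤ s.sup' hs (fun i => |f i - g i|) := by
  have key (f g : ι → α) : s.sup' hs f ≤ s.sup' hs g + s.sup' hs (fun i => |f i - g i|) :=
    sup'_le _ _ fun i hi => calc
      f i ≤ g i + |f i - g i| := sub_le_iff_le_add'.mp (le_abs_self _)
      _ ≤ _ := add_le_add (le_sup' g hi) (le_sup' (fun i => |f i - g i|) hi)
  exact abs_sub_le_iff.mpr ⟨sub_le_iff_le_add'.mpr (key f g),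
    sub_le_iff_le_add'.mpr (by simpa only [abs_sub_comm] using key g f)⟩

lemma abs_perimCauchy_sub_le (n : ℕ) (x y : ℕ → EuclideanSpace ℝ (Fin 2)) :
    |perimCauchy n x - perimCauchy n y|
      ≤ 2 * π * (range (n + 1)).sup' nonempty_range_add_one (fun k => ‖x k - y k‖) := by
  have hcont (x : ℕ → EuclideanSpace ℝ (Fin 2)) : Continuous fun θ =>
      (range (n + 1)).sup' nonempty_range_add_one (fun k => ⟪x k, unitVec θ⟫) :=
    Continuous.finset_sup'_apply _ fun k _ => continuous_inner_unitVec (x k)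
  have hpt (θ : ℝ) : ‖(range (n + 1)).sup' nonempty_range_add_one (fun k => ⟪x k, unitVec θ⟫)
      - (range (n + 1)).sup' nonempty_range_add_one (fun k => ⟪y k, unitVec θ⟫)‖
      ≤ (range (n + 1)).sup' nonempty_range_add_one (fun k => ‖x k - y k‖) := by
    rw [Real.norm_eq_abs]
    refine (abs_sup'_sub_sup'_le _ _ _).trans (sup'_mono_fun fun k _ => ?_)
    calc |⟪x k, unitVec θ⟫ - ⟪y k, unitVec θ⟫| = |⟪x k - y k, unitVec θ⟫| := by
          rw [inner_sub_left]
      _ ≤ ‖x k - y k‖ * ‖unitVec θ‖ := abs_real_inner_le_norm _ _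
      _ = ‖x k - y k‖ := by rw [norm_unitVec, mul_one]
  rw [perimCauchy, perimCauchy, ← intervalIntegral.integral_sub ((hcont x).intervalIntegrable _ _)
    ((hcont y).intervalIntegrable _ _)]
  refine (intervalIntegral.norm_integral_le_of_norm_le_const fun θ _ => hpt θ).trans_eq ?_
  rw [sub_zero, abs_of_pos two_pi_pos, mul_comm]

lemma perimCauchy_natCast_smul (n : ℕ) (μ : EuclideanSpace ℝ (Fin 2)) :
    perimCauchy n (fun k => (k : ℝ) • μ) = n * (2 * ‖μ‖) := by
  simp_rw [perimCauchy, real_inner_smul_left, sup'_range_natCast_mul]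
  rw [intervalIntegral.integral_const_mul, integral_max_inner_unitVec]

lemma tendsto_sup'_range_div_of_tendsto_div {d : ℕ → ℝ}
    (h : Tendsto (fun k => d k / k) atTop (nhds 0)) :
    Tendsto (fun n => (range (n + 1)).sup' nonempty_range_add_one d / n) atTop (nhds 0) := by
  set D := fun n => (range (n + 1)).sup' nonempty_range_add_one d
  refine tendsto_order.mpr ⟨fun a ha => ?_, fun a ha => ?_⟩
  · filter_upwards [(tendsto_order.mp h).1 a ha] with n hn
    exact hn.trans_le (div_le_div_of_nonneg_right (le_sup' d (self_mem_range_succ n)) n.cast_nonneg)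
  · obtain ⟨K, hK⟩ := eventually_atTop.mp ((tendsto_order.mp h).2 (a / 2) (half_pos ha))
    have hDK : Tendsto (fun n : ℕ => D K / n) atTop (nhds 0) :=
      tendsto_const_div_atTop_nhds_zero_nat (D K)
    filter_upwards [(tendsto_order.mp hDK).2 (a / 2) (half_pos ha), eventually_ge_atTop K,
      eventually_gt_atTop 0] with n hDn hKn hn
    have hn' : (0 : ℝ) < n := by exact_mod_cast hn
    have hDn_le : D n ≤ max (D K) (a / 2 * n) := sup'_le _ _ fun k hk => by
      rcases le_or_gt k K with hkK | hKk
      · exact le_max_of_le_left (le_sup' d (mem_range.mpr (Nat.lt_succ_of_le hkK)))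
      · have hkn : (k : ℝ) ≤ n := by exact_mod_cast Nat.lt_succ_iff.mp (mem_range.mp hk)
        have hk : (0 : ℝ) < k := by exact_mod_cast hKk.trans_le' K.zero_le
        have := (div_lt_iff₀ hk).mp (hK k hKk.le)
        exact le_max_of_le_right (by nlinarith)
    calc D n / n ≤ max (D K) (a / 2 * n) / n := by gcongr
      _ < a := by
        rw [div_lt_iff₀ hn']
        exact max_lt (by linarith [(div_lt_iff₀ hn').mp hDn, mul_pos ha hn']) (by nlinarith)

theorem tendsto_perimCauchy_div_of_tendsto_inv_smul {x : ℕ → EuclideanSpace ℝ (Fin 2)}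
    {μ : EuclideanSpace ℝ (Fin 2)} (hx : Tendsto (fun n : ℕ => (n : ℝ)⁻¹ • x n) atTop (nhds μ)) :
    Tendsto (fun n => perimCauchy n x / n) atTop (nhds (2 * ‖μ‖)) := by
  set d : ℕ → ℝ := fun k => ‖x k - (k : ℝ) • μ‖
  have hd : Tendsto (fun k => d k / k) atTop (nhds 0) := by
    refine (tendsto_iff_norm_sub_tendsto_zero.mp hx).congr' ?_
    filter_upwards [eventually_gt_atTop 0] with k hk
    have hk' : (k : ℝ) ≠ 0 := by positivity
    rw [show (k : ℝ)⁻¹ • x k - μ = (k : ℝ)⁻¹ • (x k - (k : ℝ) • μ) by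
      rw [smul_sub, inv_smul_smul₀ hk'], norm_smul, norm_inv, Real.norm_natCast, inv_mul_eq_div]
  have hbound : ∀ᶠ n : ℕ in atTop, ‖perimCauchy n x / n - 2 * ‖μ‖‖
      ≤ 2 * π * ((range (n + 1)).sup' nonempty_range_add_one d / n) := by
    filter_upwards [eventually_gt_atTop 0] with n hn
    have hn' : (0 : ℝ) < n := by exact_mod_cast hn
    calc ‖perimCauchy n x / n - 2 * ‖μ‖‖
        = |perimCauchy n x - perimCauchy n (fun k => (k : ℝ) • μ)| / n := by
          rw [perimCauchy_natCast_smul, Real.norm_eq_abs, ← abs_of_pos hn', ← abs_div,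
            abs_of_pos hn', sub_div, mul_div_cancel_left₀ _ hn'.ne']
      _ ≤ 2 * π * (range (n + 1)).sup' nonempty_range_add_one d / n := by
          gcongr
          exact abs_perimCauchy_sub_le n _ _
      _ = _ := mul_div_assoc _ _ _
  rw [tendsto_iff_norm_sub_tendsto_zero]
  exact squeeze_zero' (.of_forall fun n => norm_nonneg _) hbound
    (by simpa using (tendsto_sup'_range_div_of_tendsto_div hd).const_mul (2 * π))

theorem perimeter_lln_general
    {Ω : Type*} [MeasureSpace Ω]
    (Z : ℕ → Ω → EuclideanSpace ℝ (Fin 2))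
    (hindep : iIndepFun Z ℙ)
    (hident : ∀ i, IdentDistrib (Z i) (Z 0) ℙ ℙ)
    (hint : Integrable (Z 0) ℙ) :
    ∀ᵐ ω ∂(ℙ : Measure Ω),
      Tendsto
        (fun n => perimCauchy n (fun k => ∑ i ∈ Finset.range k, Z i ω) / n)
        atTop (nhds (2 * ‖∫ ω, Z 0 ω‖)) := by
  filter_upwards [strong_law_ae Z hint (fun i j hij => hindep.indepFun hij) hident] with ω hω
  exact tendsto_perimCauchy_div_of_tendsto_inv_smul hω

/-- Strong law of large numbers for the perimeter of the convex hull of a planar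
random walk: `L_n / n → 2‖μ‖` a.s. -/
theorem perimeter_lln
    {Ω : Type*} [MeasureSpace Ω] [IsProbabilityMeasure (ℙ : Measure Ω)]
    (Z : ℕ → Ω → EuclideanSpace ℝ (Fin 2))
    (hmeas : ∀ i, Measurable (Z i))
    (hindep : iIndepFun Z ℙ)
    (hident : ∀ i, IdentDistrib (Z i) (Z 0) ℙ ℙ)
    (hint : Integrable (Z 0) ℙ) :
    ∀ᵐ ω ∂(ℙ : Measure Ω),
      Tendsto
        (fun n => perimCauchy n (fun k => ∑ i ∈ Finset.range k, Z i ω) / n)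
        atTop (nhds (2 * ‖∫ ω, Z 0 ω‖)) :=
  perimeter_lln_general Z hindep hident hint
end

section
/- Let Z, Z1, Z2, ... be i.i.d. random vectors in ℝ² with E‖Z‖ < ∞ and mean μ = E Z, and let D_n = diam{0, S_1, ..., S_n} with S_k = Z1 + ... + Z_k. Then D_n/n → ‖μ‖ almost surely and in L¹. -/
/-!
By the strong law, `S_k = k • μ + o(k)`. Hence every distance `‖S_j - S_k‖` with `j, k ≤ n` is at
most `n ‖μ‖ + o(n)`, while `‖S_n - S_0‖ ≥ n ‖μ‖ - o(n)`, so `D_n / n → ‖μ‖` almost surely.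
For the `L¹` statement, `D_n / n` is dominated by the average of the `‖Z_i‖`, and averages of an
identically distributed integrable family are uniformly integrable; Vitali's theorem then upgrades
almost sure convergence to convergence in `L¹`.
-/

open MeasureTheory ProbabilityTheory Filter Topology Metric

section

variable {E : Type*} [NormedAddCommGroup E] [NormedSpace ℝ E]

lemma exists_norm_le_mul_add_of_tendsto_inv_smul {T : ℕ → E}
    (h : Tendsto (fun n : ℕ => (n : ℝ)⁻¹ • T n) atTop (𝓝 0)) {ε : ℝ} (hε : 0 < ε) :
    ∃ C, ∀ k : ℕ, ‖T k‖ ≤ ε * k + C := by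
  obtain ⟨N, hN⟩ := Metric.tendsto_atTop.mp h ε hε
  refine ⟨∑ j ∈ Finset.range (N + 1), ‖T j‖, fun k => ?_⟩
  rcases le_or_gt k N with hk | hk
  · have := Finset.single_le_sum (fun j _ => norm_nonneg (T j))
      (Finset.mem_range.2 (Nat.lt_succ_of_le hk))
    have : 0 ≤ ε * k := by positivity
    linarith
  · have hk0 : (0 : ℝ) < k := by exact_mod_cast (Nat.zero_le N).trans_lt hk
    have hsum : 0 ≤ ∑ j ∈ Finset.range (N + 1), ‖T j‖ := by positivity
    have := hN k hk.le
    rw [dist_zero_right, norm_smul, norm_inv, Real.norm_natCast, inv_mul_lt_iff₀ hk0] at this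
    linarith

lemma abs_diam_image_Iic_sub_le {S : ℕ → E} (hS0 : S 0 = 0) (μ : E) {n : ℕ} {r : ℝ}
    (hr : ∀ k ≤ n, ‖S k - (k : ℝ) • μ‖ ≤ r) :
    |diam (S '' Set.Iic n) - n * ‖μ‖| ≤ 2 * r := by
  have hr0 : 0 ≤ r := (norm_nonneg _).trans (hr 0 (Nat.zero_le n))
  have hbdd : Bornology.IsBounded (S '' Set.Iic n) := ((Set.finite_Iic n).image S).isBounded
  have hupper : diam (S '' Set.Iic n) ≤ n * ‖μ‖ + 2 * r := by
    refine diam_le_of_forall_dist_le (by positivity) ?_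
    rintro _ ⟨j, hj, rfl⟩ _ ⟨k, hk, rfl⟩
    have hj' : (j : ℝ) ≤ n := by exact_mod_cast hj
    have hk' : (k : ℝ) ≤ n := by exact_mod_cast hk
    have hjk : |(j : ℝ) - k| ≤ n := abs_sub_le_iff.2 ⟨by linarith [k.cast_nonneg (α := ℝ)],
      by linarith [j.cast_nonneg (α := ℝ)]⟩
    have hsplit : S j - S k = (S j - (j : ℝ) • μ) - (S k - (k : ℝ) • μ) + ((j : ℝ) - k) • μ := by
      rw [sub_smul]; abel
    calc dist (S j) (S k) = ‖S j - S k‖ := dist_eq_norm _ _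
      _ ≤ ‖S j - (j : ℝ) • μ‖ + ‖S k - (k : ℝ) • μ‖ + |(j : ℝ) - k| * ‖μ‖ := by
        rw [hsplit, ← Real.norm_eq_abs, ← norm_smul]
        exact (norm_add_le _ _).trans (add_le_add_left (norm_sub_le _ _) _)
      _ ≤ r + r + n * ‖μ‖ := by gcongr <;> [exact hr j hj; exact hr k hk]
      _ = n * ‖μ‖ + 2 * r := by ring
  have hlower : n * ‖μ‖ - r ≤ diam (S '' Set.Iic n) := by
    have hdist := dist_le_diam_of_mem hbdd (Set.mem_image_of_mem S Set.self_mem_Iic)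
      (Set.mem_image_of_mem S (Set.mem_Iic.2 (Nat.zero_le n)))
    rw [hS0, dist_zero_right] at hdist
    have := norm_sub_norm_le ((n : ℝ) • μ) (S n)
    rw [norm_smul, Real.norm_natCast, norm_sub_rev] at this
    linarith [hr n le_rfl]
  rw [abs_le]
  constructor <;> linarith

theorem tendsto_diam_image_Iic_div {S : ℕ → E} (hS0 : S 0 = 0) {μ : E}
    (h : Tendsto (fun n : ℕ => (n : ℝ)⁻¹ • S n) atTop (𝓝 μ)) :
    Tendsto (fun n : ℕ => diam (S '' Set.Iic n) / n) atTop (𝓝 ‖μ‖) := by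
  have hT : Tendsto (fun n : ℕ => (n : ℝ)⁻¹ • (S n - (n : ℝ) • μ)) atTop (𝓝 0) := by
    refine (sub_self μ ▸ h.sub_const μ).congr' ?_
    filter_upwards [eventually_ne_atTop 0] with n hn
    rw [smul_sub, smul_smul, inv_mul_cancel₀ (Nat.cast_ne_zero.2 hn), one_smul]
  rw [Metric.tendsto_nhds]
  intro δ hδ
  obtain ⟨C, hC⟩ := exists_norm_le_mul_add_of_tendsto_inv_smul hT (div_pos hδ four_pos)
  filter_upwards [eventually_gt_atTop 0,
    (tendsto_const_div_atTop_nhds_zero_nat C).eventually (gt_mem_nhds (div_pos hδ four_pos))]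
    with n hn hCn
  have hn' : (0 : ℝ) < n := Nat.cast_pos.2 hn
  have hbound := abs_diam_image_Iic_sub_le hS0 μ (n := n) (r := δ / 4 * n + C) fun k hk =>
    (hC k).trans (by gcongr)
  calc dist (diam (S '' Set.Iic n) / n) ‖μ‖ = |diam (S '' Set.Iic n) - n * ‖μ‖| / n := by
        rw [Real.dist_eq, ← abs_of_pos hn', ← abs_div, abs_of_pos hn', sub_div,
          mul_div_cancel_left₀ _ hn'.ne']
    _ ≤ 2 * (δ / 4 * n + C) / n := by gcongr
    _ = δ / 2 + 2 * (C / n) := by field_simp; ring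
    _ < δ := by linarith

end

lemma diam_image_Iic_partialSums_le {E : Type*} [SeminormedAddCommGroup E] (z : ℕ → E) (n : ℕ) :
    diam ((fun k => ∑ i ∈ Finset.range k, z i) '' Set.Iic n) ≤ ∑ i ∈ Finset.range n, ‖z i‖ := by
  refine diam_le_of_forall_dist_le (by positivity) ?_
  rintro _ ⟨j, hj, rfl⟩ _ ⟨k, hk, rfl⟩
  wlog hkj : k ≤ j generalizing j k
  · rw [dist_comm]; exact this k hk j hj (le_of_not_ge hkj)
  rw [dist_eq_norm, ← Finset.sum_Ico_eq_sub _ hkj]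
  exact (norm_sum_le _ _).trans <| Finset.sum_le_sum_of_subset_of_nonneg
    (fun i hi => Finset.mem_range.2 ((Finset.mem_Ico.1 hi).2.trans_le hj))
    fun _ _ _ => norm_nonneg _

lemma measurable_diam_image {Ω E ι : Type*} [MeasurableSpace Ω] [PseudoMetricSpace E]
    [MeasurableSpace E] [OpensMeasurableSpace E] [SecondCountableTopology E]
    {S : ι → Ω → E} (hS : ∀ k, Measurable (S k)) {s : Set ι} (hs : s.Countable) :
    Measurable fun ω => diam ((fun k => S k ω) '' s) := by
  simp only [Metric.diam, Metric.ediam, iSup_image]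
  exact (Measurable.biSup _ hs fun j _ => Measurable.biSup _ hs fun k _ =>
    (hS j).edist (hS k)).ennreal_toReal

namespace MeasureTheory

variable {α β γ ι : Type*} {m : MeasurableSpace α} {μ : Measure α} {p : ENNReal}
  [NormedAddCommGroup β] [NormedAddCommGroup γ]

theorem UnifIntegrable.of_norm_le {f : ι → α → β} {g : ι → α → γ} (hg : UnifIntegrable g p μ)
    (hfg : ∀ i, ∀ᵐ x ∂μ, ‖f i x‖ ≤ ‖g i x‖) : UnifIntegrable f p μ := by
  intro ε hε
  obtain ⟨δ, hδ, hgδ⟩ := hg hε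
  refine ⟨δ, hδ, fun i s hs hμs => (eLpNorm_mono_ae ?_).trans (hgδ i s hs hμs)⟩
  filter_upwards [hfg i] with x hx
  by_cases hxs : x ∈ s <;> simp [hxs, hx]

theorem tendsto_integral_norm_sub_of_tendsto_ae [IsFiniteMeasure μ] {f : ℕ → α → β} {g : α → β}
    (hf : ∀ n, AEStronglyMeasurable (f n) μ) (hg : Integrable g μ) (hui : UnifIntegrable f 1 μ)
    (hfg : ∀ᵐ x ∂μ, Tendsto (fun n => f n x) atTop (𝓝 (g x))) :
    Tendsto (fun n => ∫ x, ‖f n x - g x‖ ∂μ) atTop (𝓝 0) := by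
  have hLp := tendsto_Lp_finite_of_tendsto_ae le_rfl ENNReal.one_ne_top hf
    (memLp_one_iff_integrable.2 hg) hui hfg
  refine ((ENNReal.tendsto_toReal ENNReal.zero_ne_top).comp hLp).congr fun n => ?_
  rw [Function.comp_apply, eLpNorm_one_eq_lintegral_enorm,
    ← integral_norm_eq_lintegral_enorm ((hf n).sub hg.1)]
  rfl

end MeasureTheory

lemma ProbabilityTheory.uniformIntegrable_average_norm_of_identDistrib {Ω E : Type*}
    [MeasurableSpace Ω] {μ : Measure Ω} [IsFiniteMeasure μ] [NormedAddCommGroup E]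
    [MeasurableSpace E] [OpensMeasurableSpace E]
    {X : ℕ → Ω → E} (hint : Integrable (X 0) μ) (hident : ∀ i, IdentDistrib (X i) (X 0) μ μ) :
    UniformIntegrable (fun (n : ℕ) ω => (n : ℝ)⁻¹ * ∑ i ∈ Finset.range n, ‖X i ω‖) 1 μ := by
  have hnorm := MemLp.uniformIntegrable_of_identDistrib le_rfl ENNReal.one_ne_top
    (memLp_one_iff_integrable.2 hint.norm) fun i => (hident i).comp measurable_norm
  convert uniformIntegrable_average le_rfl hnorm using 3 with n ω
  simp

/-- Law of large numbers for the diameter of a planar random walk: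
`D_n / n → ‖μ‖` almost surely and in `L¹`. -/
theorem diameter_lln
    {Ω : Type*} [MeasureSpace Ω] [IsProbabilityMeasure (ℙ : Measure Ω)]
    (Z : ℕ → Ω → EuclideanSpace ℝ (Fin 2))
    (hmeas : ∀ i, Measurable (Z i))
    (hindep : iIndepFun Z ℙ)
    (hident : ∀ i, IdentDistrib (Z i) (Z 0) ℙ ℙ)
    (hint : Integrable (Z 0) ℙ)
    (D : ℕ → Ω → ℝ)
    (hD : ∀ n ω, D n ω =
      Metric.diam ((fun k => ∑ i ∈ Finset.range k, Z i ω) '' Set.Iic n)) :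
    (∀ᵐ ω ∂(ℙ : Measure Ω),
        Tendsto (fun n => D n ω / n) atTop (nhds ‖∫ ω, Z 0 ω‖)) ∧
      Tendsto (fun n => ∫ ω, |D n ω / n - ‖∫ ω', Z 0 ω'‖|) atTop (nhds 0) := by
  have hlln := strong_law_ae Z hint (fun i j hij => hindep.indepFun hij) hident
  have hae : ∀ᵐ ω, Tendsto (fun n => D n ω / n) atTop (𝓝 ‖∫ ω, Z 0 ω‖) := by
    filter_upwards [hlln] with ω hω
    simpa only [hD] using tendsto_diam_image_Iic_div (by simp) hω
  refine ⟨hae, ?_⟩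
  have hDmeas : ∀ n, Measurable (D n) := fun n => by
    rw [funext (hD n)]
    exact measurable_diam_image (fun k => Finset.measurable_sum (Finset.range k) fun i _ => hmeas i)
      (Set.to_countable _)
  have hui : UnifIntegrable (fun n ω => D n ω / n) 1 ℙ :=
    (uniformIntegrable_average_norm_of_identDistrib hint hident).unifIntegrable.of_norm_le fun n =>
      ae_of_all _ fun ω => by
        rw [hD, Real.norm_eq_abs, Real.norm_eq_abs, abs_of_nonneg (by positivity),
          abs_of_nonneg (by positivity), div_eq_inv_mul]
        gcongr
        exact diam_image_Iic_partialSums_le _ n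
  simpa only [Real.norm_eq_abs] using tendsto_integral_norm_sub_of_tendsto_ae
    (fun n => ((hDmeas n).div_const _).aestronglyMeasurable) (integrable_const _) hui hae
end

section
/- Suppose a_k is a sequence of reals with a_k = c + o(1) as k → ∞, for a constant c. Then ∑_{k=1}^n a_k/k = c·log n + o(log n) as n → ∞. Consequently, for a planar random walk with E(‖Z‖²)<∞ and drift μ ≠ 0, the Spitzer–Widom formula E L_n = 2∑_{k=1}^n E‖S_k‖/k together with E‖S_k‖ = ‖μ‖k + σ_{μ⊥}²/(2‖μ‖) + o(1) yields E L_n = 2‖μ‖n + (σ_{μ⊥}²/‖μ‖ + o(1))·log n. -/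
/-! The weights `1/k` have divergent partial sums `H_n ~ log n`, so the weighted Cesàro mean
`H_n⁻¹ ∑ a_k / k` of a convergent sequence has the same limit `c`. For the perimeter,
apply this to `a_k = E‖S_k‖ - ‖μ‖k`, using `∑_{k ≤ n} (E‖S_k‖ - ‖μ‖k) / k = ∑_{k ≤ n} E‖S_k‖ / k - ‖μ‖n`. -/

open Filter Real Finset Asymptotics Topology

theorem Filter.Tendsto.weighted_cesaro_smul {E : Type*} [NormedAddCommGroup E] [NormedSpace ℝ E]
    {u : ℕ → E} {l : E} {w : ℕ → ℝ} (h : Tendsto u atTop (𝓝 l)) (hw : 0 ≤ w)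
    (hW : Tendsto (fun n => ∑ i ∈ range n, w i) atTop atTop) :
    Tendsto (fun n => (∑ i ∈ range n, w i)⁻¹ • ∑ i ∈ range n, w i • u i) atTop (𝓝 l) := by
  have hsmall : (fun i => w i • (u i - l)) =o[atTop] w := by
    simpa using (isBigO_refl w atTop).smul_isLittleO
      ((isLittleO_one_iff ℝ).2 (tendsto_sub_nhds_zero_iff.2 h))
  rw [← tendsto_sub_nhds_zero_iff]
  refine ((hsmall.sum_range hw hW).tendsto_inv_smul_nhds_zero).congr' ?_
  filter_upwards [hW.eventually_gt_atTop 0] with n hn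
  simp only [smul_sub, sum_sub_distrib, ← sum_smul, smul_smul, inv_mul_cancel₀ hn.ne', one_smul]

theorem harmonic_eq_sum_range_inv (n : ℕ) :
    (harmonic n : ℝ) = ∑ i ∈ range n, ((i : ℝ) + 1)⁻¹ := by
  simp [harmonic]

theorem tendsto_harmonic_atTop : Tendsto (fun n : ℕ => (harmonic n : ℝ)) atTop atTop :=
  tendsto_atTop_mono log_add_one_le_harmonic <|
    tendsto_log_atTop.comp <| tendsto_natCast_atTop_atTop.comp <| tendsto_add_atTop_nat 1

theorem tendsto_harmonic_div_log :
    Tendsto (fun n : ℕ => (harmonic n : ℝ) / log n) atTop (𝓝 1) := by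
  have hlog : Tendsto (fun n : ℕ => log n) atTop atTop :=
    tendsto_log_atTop.comp tendsto_natCast_atTop_atTop
  have := (tendsto_harmonic_sub_log.div_atTop hlog).add_const 1
  rw [zero_add] at this
  refine this.congr' ?_
  filter_upwards [hlog.eventually_gt_atTop 0] with n hn
  field_simp
  ring

theorem sum_Icc_one_eq_sum_range {M : Type*} [AddCommMonoid M] (f : ℕ → M) (n : ℕ) :
    ∑ k ∈ Icc 1 n, f k = ∑ k ∈ range n, f (k + 1) := by
  rw [range_eq_Ico, sum_Ico_add' f 0 n 1, zero_add, Ico_add_one_right_eq_Icc]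

theorem Filter.Tendsto.sum_Icc_div_div_log {a : ℕ → ℝ} {c : ℝ} (ha : Tendsto a atTop (𝓝 c)) :
    Tendsto (fun n => (∑ k ∈ Icc 1 n, a k / k) / Real.log n) atTop (𝓝 c) := by
  have hW : Tendsto (fun n => ∑ i ∈ range n, ((i : ℝ) + 1)⁻¹) atTop atTop := by
    simpa only [harmonic_eq_sum_range_inv] using tendsto_harmonic_atTop
  have hmean := (ha.comp (tendsto_add_atTop_nat 1)).weighted_cesaro_smul
    (fun i => by positivity) hW
  refine (mul_one c ▸ hmean.mul tendsto_harmonic_div_log).congr' ?_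
  filter_upwards [tendsto_harmonic_atTop.eventually_gt_atTop 0] with n hn
  rw [harmonic_eq_sum_range_inv] at hn ⊢
  simp only [smul_eq_mul, sum_Icc_one_eq_sum_range, Nat.cast_add_one, Function.comp_apply,
    ← div_eq_inv_mul]
  generalize ∑ i ∈ range n, ((i : ℝ) + 1)⁻¹ = H at hn ⊢
  field_simp

theorem sum_Icc_sub_mul_div (b : ℕ → ℝ) (m : ℝ) (n : ℕ) :
    ∑ k ∈ Icc 1 n, (b k - m * k) / k = ∑ k ∈ Icc 1 n, b k / k - m * n := by
  have hterm : ∀ k ∈ Icc 1 n, (b k - m * k) / k = b k / k - m := fun k hk => by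
    have : (k : ℝ) ≠ 0 := by positivity [(mem_Icc.1 hk).1]
    field_simp
  rw [sum_congr rfl hterm, sum_sub_distrib, sum_const, Nat.card_Icc, nsmul_eq_mul,
    Nat.add_sub_cancel, mul_comm]

/-- If `a k → c`, then `∑_{k=1}^n a_k/k = c log n + o(log n)`. Consequently,
via the Spitzer–Widom formula `E L_n = 2 ∑_{k=1}^n E‖S_k‖ / k` and the expansion
`E‖S_k‖ = ‖μ‖k + σ_{μ⊥}²/(2‖μ‖) + o(1)`, one gets
`E L_n = 2‖μ‖n + (σ_{μ⊥}²/‖μ‖ + o(1)) log n`. -/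
theorem sum_div_log_asymptotics
    (a : ℕ → ℝ) (c : ℝ) (ha : Tendsto a atTop (nhds c)) :
    Tendsto (fun n => (∑ k ∈ Finset.Icc 1 n, a k / k) / Real.log n)
        atTop (nhds c) ∧
      ∀ (m σperp2 : ℝ) (ES EL : ℕ → ℝ), 0 < m →
        (∀ n, EL n = 2 * ∑ k ∈ Finset.Icc 1 n, ES k / k) →
        Tendsto (fun k => ES k - m * k) atTop (nhds (σperp2 / (2 * m))) →
        Tendsto (fun n => (EL n - 2 * m * n) / Real.log n) atTop
          (nhds (σperp2 / m)) := by
  refine ⟨ha.sum_Icc_div_div_log, fun m σperp2 ES EL _ hEL hES => ?_⟩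
  have hlimit : 2 * (σperp2 / (2 * m)) = σperp2 / m := by
    rw [← mul_div_assoc, mul_div_mul_left _ _ two_ne_zero]
  refine (hlimit ▸ hES.sum_Icc_div_div_log.const_mul 2).congr fun n => ?_
  rw [hEL, sum_Icc_sub_mul_div, mul_div_assoc', mul_sub, mul_assoc]
end

section
/- Let (ξ_i) be i.i.d. real random variables with Eξ = 0 and E(|ξ|^p) < ∞ for some p > 2, and set T_{n,j} = ∑_{i=n−j}^{n} ξ_i. Then there exist β0, ε0 ∈ (0,1/2) such that for all β ∈ (0,β0) and ε ∈ (0,ε0), almost surely max_{0≤j≤n^β} |T_{n,j}| / n^{1/2−ε} → 0 as n → ∞. -/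
/-!
Since the `ξₙ` are distributed as `ξ₀` and `E|ξ₀|^p < ∞`, the series `∑ₙ P(|ξₙ|^p > n)` is
finite, so by Borel–Cantelli almost surely `|ξₙ| ≤ n^{1/p}` for all large `n`, hence also
`maxᵢ≤ₙ |ξᵢ| ≤ n^{1/p}`. A sum of at most `n^β + 1` of the last increments is then
`O(n^{β + 1/p})`, which is `o(n^{1/2 - ε})` as soon as `β + ε < 1/2 - 1/p`.
-/

open MeasureTheory ProbabilityTheory Filter Asymptotics

theorem ae_eventually_abs_le_rpow_inv
    {Ω : Type*} [MeasureSpace Ω] [IsProbabilityMeasure (ℙ : Measure Ω)]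
    {ξ : ℕ → Ω → ℝ} {X : Ω → ℝ} (hident : ∀ i, IdentDistrib (ξ i) X ℙ ℙ)
    {p : ℝ} (hp : 0 < p) (hX : MemLp X (ENNReal.ofReal p) ℙ) :
    ∀ᵐ ω ∂(ℙ : Measure Ω), ∀ᶠ n : ℕ in atTop, |ξ n ω| ≤ (n : ℝ) ^ p⁻¹ := by
  have hint : Integrable (fun ω => |X ω| ^ p) ℙ := by
    simpa [ENNReal.toReal_ofReal hp.le] using
      hX.integrable_norm_rpow (by simpa using hp) ENNReal.ofReal_ne_top
  have hsum := tsum_prob_mem_Ioi_lt_top hint (fun ω => by positivity)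
  have hcomp : ∀ n : ℕ,
      ℙ {ω | |ξ n ω| ^ p ∈ Set.Ioi (n : ℝ)} = ℙ {ω | |X ω| ^ p ∈ Set.Ioi (n : ℝ)} :=
    fun n => ((hident n).comp (by fun_prop : Measurable fun x : ℝ => |x| ^ p)).measure_mem_eq
      measurableSet_Ioi
  simp_rw [← hcomp] at hsum
  filter_upwards [ae_eventually_notMem hsum.ne] with ω hω
  filter_upwards [hω] with n hn
  rw [Set.mem_Ioi, not_lt] at hn
  exact (Real.le_rpow_inv_iff_of_pos (abs_nonneg _) n.cast_nonneg hp).2 hn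

theorem isLittleO_natCast_rpow_rpow {a b : ℝ} (hab : a < b) :
    (fun n : ℕ => (n : ℝ) ^ a) =o[atTop] fun n : ℕ => (n : ℝ) ^ b := by
  have hpos : ∀ᶠ n : ℕ in atTop, (0 : ℝ) < n :=
    (eventually_gt_atTop 0).mono fun n hn => Nat.cast_pos.2 hn
  rw [isLittleO_iff_tendsto' (hpos.mono fun n hn h => absurd h (by positivity))]
  refine ((tendsto_rpow_neg_atTop (sub_pos.2 hab)).comp tendsto_natCast_atTop_atTop).congr' ?_
  filter_upwards [hpos] with n hn
  rw [Function.comp_apply, neg_sub, Real.rpow_sub hn]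

def maxAbsUpTo (x : ℕ → ℝ) (n : ℕ) : ℝ :=
  (Finset.range (n + 1)).sup' Finset.nonempty_range_add_one fun i => |x i|

theorem abs_le_maxAbsUpTo (x : ℕ → ℝ) {i n : ℕ} (h : i ≤ n) : |x i| ≤ maxAbsUpTo x n :=
  Finset.le_sup' (fun i => |x i|) (Finset.mem_range_succ_iff.2 h)

theorem maxAbsUpTo_le_iff {x : ℕ → ℝ} {n : ℕ} {c : ℝ} :
    maxAbsUpTo x n ≤ c ↔ ∀ i ≤ n, |x i| ≤ c := by
  simp [maxAbsUpTo]

theorem maxAbsUpTo_nonneg (x : ℕ → ℝ) (n : ℕ) : 0 ≤ maxAbsUpTo x n :=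
  (abs_nonneg _).trans (abs_le_maxAbsUpTo x n.zero_le)

theorem eventually_maxAbsUpTo_le {x g : ℕ → ℝ} (hg : Monotone g)
    (hg_top : Tendsto g atTop atTop) (h : ∀ᶠ n in atTop, |x n| ≤ g n) :
    ∀ᶠ n in atTop, maxAbsUpTo x n ≤ g n := by
  obtain ⟨N, hN⟩ := eventually_atTop.1 h
  filter_upwards [hg_top.eventually_ge_atTop (maxAbsUpTo x N)] with n hn
  refine maxAbsUpTo_le_iff.2 fun i hi => ?_
  rcases le_total i N with hiN | hNi
  · exact (abs_le_maxAbsUpTo x hiN).trans hn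
  · exact (hN i hNi).trans (hg hi)

theorem abs_sum_Icc_sub_le (x : ℕ → ℝ) (j n : ℕ) :
    |∑ i ∈ Finset.Icc (n - j) n, x i| ≤ (j + 1) * maxAbsUpTo x n :=
  calc |∑ i ∈ Finset.Icc (n - j) n, x i|
      ≤ ∑ i ∈ Finset.Icc (n - j) n, |x i| := Finset.abs_sum_le_sum_abs _ _
    _ ≤ ∑ _i ∈ Finset.Icc (n - j) n, maxAbsUpTo x n :=
        Finset.sum_le_sum fun i hi => abs_le_maxAbsUpTo x (Finset.mem_Icc.1 hi).2
    _ ≤ (j + 1) * maxAbsUpTo x n := by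
        rw [Finset.sum_const, nsmul_eq_mul, Nat.card_Icc]
        gcongr
        · exact maxAbsUpTo_nonneg x n
        · norm_cast; omega

theorem sup'_abs_sum_Icc_sub_le (x : ℕ → ℝ) (m n : ℕ) :
    (Finset.range (m + 1)).sup' Finset.nonempty_range_add_one
        (fun j => |∑ i ∈ Finset.Icc (n - j) n, x i|) ≤ (m + 1) * maxAbsUpTo x n := by
  refine Finset.sup'_le _ _ fun j hj => (abs_sum_Icc_sub_le x j n).trans ?_
  gcongr
  · exact maxAbsUpTo_nonneg x n
  · exact_mod_cast Finset.mem_range_succ_iff.1 hj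

theorem isBigO_sup'_abs_sum_Icc_sub {x : ℕ → ℝ} {a β : ℝ} (ha : 0 < a) (hβ : 0 ≤ β)
    (hx : ∀ᶠ n in atTop, |x n| ≤ (n : ℝ) ^ a) :
    (fun n : ℕ => (Finset.range (⌊(n : ℝ) ^ β⌋₊ + 1)).sup' Finset.nonempty_range_add_one
        (fun j => |∑ i ∈ Finset.Icc (n - j) n, x i|)) =O[atTop]
      fun n : ℕ => (n : ℝ) ^ (β + a) := by
  have hmono : Monotone fun n : ℕ => (n : ℝ) ^ a := fun m n hmn =>
    Real.rpow_le_rpow m.cast_nonneg (Nat.cast_le.2 hmn) ha.le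
  have hmax := eventually_maxAbsUpTo_le hmono
    ((tendsto_rpow_atTop ha).comp tendsto_natCast_atTop_atTop) hx
  refine IsBigO.of_bound 2 ?_
  filter_upwards [hmax, eventually_ge_atTop 1] with n hn hn1
  have hn1' : (1 : ℝ) ≤ n := by exact_mod_cast hn1
  have hlen : (⌊(n : ℝ) ^ β⌋₊ : ℝ) + 1 ≤ 2 * (n : ℝ) ^ β := by
    linarith [Nat.floor_le (by positivity : (0 : ℝ) ≤ (n : ℝ) ^ β), Real.one_le_rpow hn1' hβ]
  have hsup0 : 0 ≤ (Finset.range (⌊(n : ℝ) ^ β⌋₊ + 1)).sup' Finset.nonempty_range_add_one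
      (fun j => |∑ i ∈ Finset.Icc (n - j) n, x i|) :=
    Finset.le_sup'_of_le _ (Finset.mem_range.2 (Nat.succ_pos _)) (abs_nonneg _)
  rw [Real.norm_of_nonneg hsup0, Real.norm_of_nonneg (by positivity),
    Real.rpow_add (by positivity), ← mul_assoc]
  calc _ ≤ ((⌊(n : ℝ) ^ β⌋₊ : ℝ) + 1) * maxAbsUpTo x n := sup'_abs_sum_Icc_sub_le x _ n
    _ ≤ 2 * (n : ℝ) ^ β * (n : ℝ) ^ a := by gcongr; exact maxAbsUpTo_nonneg x n

theorem max_tail_sums_small_general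
    {Ω : Type*} [MeasureSpace Ω] [IsProbabilityMeasure (ℙ : Measure Ω)]
    (ξ : ℕ → Ω → ℝ)
    (hident : ∀ i, IdentDistrib (ξ i) (ξ 0) ℙ ℙ)
    (p : ℝ) (hp : 2 < p) (hLp : MemLp (ξ 0) (ENNReal.ofReal p) ℙ) :
    ∃ β₀ ∈ Set.Ioo (0 : ℝ) (1 / 2), ∃ ε₀ ∈ Set.Ioo (0 : ℝ) (1 / 2),
      ∀ β ∈ Set.Ioo (0 : ℝ) β₀, ∀ ε ∈ Set.Ioo (0 : ℝ) ε₀,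
        ∀ᵐ ω ∂(ℙ : Measure Ω),
          Tendsto
            (fun n : ℕ =>
              ((Finset.range (⌊(n : ℝ) ^ β⌋₊ + 1)).sup' Finset.nonempty_range_add_one
                  (fun j => |∑ i ∈ Finset.Icc (n - j) n, ξ i ω|)) /
                (n : ℝ) ^ ((1 : ℝ) / 2 - ε))
            atTop (nhds 0) := by
  have hp0 : 0 < p := by linarith
  have hpinv0 : 0 < p⁻¹ := inv_pos.2 hp0
  have hpinv : p⁻¹ < 1 / 2 := by rw [one_div]; exact inv_strictAnti₀ two_pos hp
  have hη : (1 / 2 - p⁻¹) / 2 ∈ Set.Ioo (0 : ℝ) (1 / 2) := ⟨by linarith, by linarith⟩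
  refine ⟨_, hη, _, hη, fun β hβ ε hε => ?_⟩
  filter_upwards [ae_eventually_abs_le_rpow_inv hident hp0 hLp] with ω hω
  exact ((isBigO_sup'_abs_sum_Icc_sub hpinv0 hβ.1.le hω).trans_isLittleO
    (isLittleO_natCast_rpow_rpow (by linarith [hβ.2, hε.2]))).tendsto_div_nhds_zero

/-- For centered i.i.d. real random variables with finite `p`-th moment, `p > 2`,
the maximal sum of the last `≤ n^β` increments up to time `n` is `o(n^{1/2−ε})`
a.s., for suitably small `β, ε`. -/
theorem max_tail_sums_small
    {Ω : Type*} [MeasureSpace Ω] [IsProbabilityMeasure (ℙ : Measure Ω)]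
    (ξ : ℕ → Ω → ℝ)
    (hmeas : ∀ i, Measurable (ξ i))
    (hindep : iIndepFun ξ ℙ)
    (hident : ∀ i, IdentDistrib (ξ i) (ξ 0) ℙ ℙ)
    (p : ℝ) (hp : 2 < p) (hLp : MemLp (ξ 0) (ENNReal.ofReal p) ℙ)
    (hmean : (∫ ω, ξ 0 ω) = 0) :
    ∃ β₀ ∈ Set.Ioo (0 : ℝ) (1 / 2), ∃ ε₀ ∈ Set.Ioo (0 : ℝ) (1 / 2),
      ∀ β ∈ Set.Ioo (0 : ℝ) β₀, ∀ ε ∈ Set.Ioo (0 : ℝ) ε₀,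
        ∀ᵐ ω ∂(ℙ : Measure Ω),
          Tendsto
            (fun n : ℕ =>
              ((Finset.range (⌊(n : ℝ) ^ β⌋₊ + 1)).sup' Finset.nonempty_range_add_one
                  (fun j => |∑ i ∈ Finset.Icc (n - j) n, ξ i ω|)) /
                (n : ℝ) ^ ((1 : ℝ) / 2 - ε))
            atTop (nhds 0) :=
  max_tail_sums_small_general ξ hident p hp hLp
end

section
/- Let (Z_i) be i.i.d. in ℝ², S_n the partial sums, and suppose E(‖Z‖²) < ∞, μ = E Z ≠ 0, and the component of Z along μ is a.s. constant (σ_μ² = 0). Fix β ∈ (0,1). Then almost surely, for all but finitely many n, the diameter D_n = max_{0≤i,j≤n} ‖S_j − S_i‖ is attained with i ≤ n^β and n − n^β ≤ j ≤ n, i.e., D_n = max over 0 ≤ i ≤ n^β, n − n^β ≤ j ≤ n of ‖S_j − S_i‖. -/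
/-!
Write `S k = k • μ + C k` with `C k = ∑ i < k, (Z i - μ)`. Degeneracy makes every `C k`
orthogonal to `μ`, so `‖S j - S i‖² = (j - i)² ‖μ‖² + ‖C j - C i‖²`. Doob's maximal inequality
and Borel–Cantelli along dyadic times give `‖C k‖ ≤ 2 n ^ a` for all `k ≤ n`, eventually a.s.,
for any `a > 1/2`. Taking `a < (1 + β)/2`, a pair with `j - i ≤ n - n ^ β` loses at least
`‖μ‖² n ^ (1 + β)` in the drift term compared to `(S 0, S n)`, more than the transverse term can
gain; so the diameter is attained by a pair with `i ≤ n ^ β` and `j ≥ n - n ^ β`.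
-/

open MeasureTheory ProbabilityTheory Filter Finset
open scoped RealInnerProductSpace

namespace ProbabilityTheory

variable {Ω : Type*} [MeasurableSpace Ω] {P : Measure Ω} {X : ℕ → Ω → ℝ}

theorem martingale_sum_range_succ (hX : ∀ i, StronglyMeasurable (X i)) (hindep : iIndepFun X P)
    (hint : ∀ i, Integrable (X i) P) (hmean : ∀ i, P[X i] = 0) :
    Martingale (fun n ω => ∑ i ∈ range (n + 1), X i ω) (Filtration.natural X hX) P := by
  have : IsProbabilityMeasure P := hindep.isProbabilityMeasure
  set ℱ := Filtration.natural X hX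
  have hadapted : StronglyAdapted ℱ fun n ω => ∑ i ∈ range (n + 1), X i ω := fun n =>
    Finset.stronglyMeasurable_fun_sum _ fun i hi =>
      (Filtration.stronglyAdapted_natural hX i).mono (ℱ.mono (Nat.lt_succ_iff.mp (mem_range.mp hi)))
  have hint_sum : ∀ n, Integrable (fun ω => ∑ i ∈ range (n + 1), X i ω) P := fun n =>
    integrable_finsetSum _ fun i _ => hint i
  refine martingale_nat hadapted hint_sum fun n => ?_
  have hstep : (fun ω => ∑ i ∈ range (n + 1 + 1), X i ω)
      = (fun ω => ∑ i ∈ range (n + 1), X i ω) + X (n + 1) := by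
    funext ω; simp only [sum_range_succ _ (n + 1), Pi.add_apply]
  rw [hstep]
  refine ((condExp_add (hint_sum n) (hint (n + 1)) _).trans ?_).symm
  have hnext : P[X (n + 1) | ℱ n] =ᵐ[P] fun _ => 0 := by
    simpa [hmean] using hindep.condExp_natural_ae_eq_of_lt hX (Nat.lt_succ_self n)
  rw [condExp_of_stronglyMeasurable (ℱ.le n) (hadapted n) (hint_sum n)]
  filter_upwards [hnext] with ω hω
  simp [hω]

theorem integral_abs_le_sqrt_variance [IsProbabilityMeasure P] {f : Ω → ℝ} (hf : MemLp f 2 P)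
    (hmean : P[f] = 0) : ∫ ω, |f ω| ∂P ≤ √(variance f P) := by
  have habs : MemLp (fun ω => |f ω|) 2 P := by simpa [Pi.abs_def] using hf.abs
  have hvar_abs := variance_nonneg (fun ω => |f ω|) P
  rw [variance_eq_sub habs] at hvar_abs
  have hvar : variance f P = ∫ ω, f ω ^ 2 ∂P := by
    rw [variance_eq_sub hf, hmean]; simp [Pi.pow_apply]
  refine Real.le_sqrt_of_sq_le ?_
  simp only [Pi.pow_apply, sq_abs] at hvar_abs
  linarith

theorem variance_sum_range_of_identDistrib [IsProbabilityMeasure P] (hindep : iIndepFun X P)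
    (hident : ∀ i, IdentDistrib (X i) (X 0) P P) (hL2 : MemLp (X 0) 2 P) (n : ℕ) :
    variance (fun ω => ∑ i ∈ range n, X i ω) P = n * variance (X 0) P := by
  have hL2i : ∀ i, MemLp (X i) 2 P := fun i => (hident i).symm.memLp_snd hL2
  have hsum : (fun ω => ∑ i ∈ range n, X i ω) = ∑ i ∈ range n, X i := by
    funext ω; simp
  rw [hsum, IndepFun.variance_sum (fun i _ => hL2i i) fun i _ j _ hij => hindep.indepFun hij,
    sum_congr rfl fun i _ => (hident i).variance_eq, sum_const, card_range, nsmul_eq_mul]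

/-- Doob's maximal inequality for the submartingale of absolute partial sums, combined with
`E |S_N| ≤ √(Var S_N)`. -/
theorem measure_le_sup_abs_sum_le [IsProbabilityMeasure P] (hmeas : ∀ i, Measurable (X i))
    (hindep : iIndepFun X P) (hident : ∀ i, IdentDistrib (X i) (X 0) P P)
    (hL2 : MemLp (X 0) 2 P) (hmean : P[X 0] = 0) {ε : ℝ} (hε : 0 < ε) (N : ℕ) :
    P {ω | ε ≤ (range (N + 1)).sup' nonempty_range_add_one
        fun k => |∑ i ∈ range (k + 1), X i ω|} ≤
      ENNReal.ofReal (√((N + 1) * variance (X 0) P) / ε) := by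
  have hX : ∀ i, StronglyMeasurable (X i) := fun i => (hmeas i).stronglyMeasurable
  have hL2i : ∀ i, MemLp (X i) 2 P := fun i => (hident i).symm.memLp_snd hL2
  have hmart := martingale_sum_range_succ hX hindep (fun i => (hL2i i).integrable one_le_two)
    fun i => (hident i).integral_eq.trans hmean
  have hsub : Submartingale (fun n ω => |∑ i ∈ range (n + 1), X i ω|)
      (Filtration.natural X hX) P := by
    have h := hmart.submartingale.sup hmart.neg.submartingale
    have habs : ((fun n ω => ∑ i ∈ range (n + 1), X i ω) ⊔ -fun n ω => ∑ i ∈ range (n + 1), X i ω)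
        = fun n ω => |∑ i ∈ range (n + 1), X i ω| := by
      funext n ω; simp [abs_eq_max_neg]
    rwa [habs] at h
  set A := {ω | ε ≤ (range (N + 1)).sup' nonempty_range_add_one
    fun k => |∑ i ∈ range (k + 1), X i ω|}
  have hfirst : ∫ ω in A, |∑ i ∈ range (N + 1), X i ω| ∂P ≤ √((N + 1) * variance (X 0) P) := by
    refine (setIntegral_le_integral (hsub.integrable N)
      (ae_of_all _ fun ω => abs_nonneg _)).trans ?_
    refine (integral_abs_le_sqrt_variance (memLp_finsetSum _ fun i _ => hL2i i) ?_).trans_eq ?_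
    · rw [integral_finsetSum _ fun i _ => (hL2i i).integrable one_le_two]
      exact sum_eq_zero fun i _ => (hident i).integral_eq.trans hmean
    · rw [variance_sum_range_of_identDistrib hindep hident hL2]; push_cast; rfl
  have hdoob := maximal_ineq hsub (fun n ω => abs_nonneg _) (ε := ε.toNNReal) N
  rw [Real.coe_toNNReal _ hε.le] at hdoob
  rw [ENNReal.ofReal_div_of_pos hε,
    ENNReal.le_div_iff_mul_le (.inl (by simpa using hε)) (.inl ENNReal.ofReal_ne_top), mul_comm]
  exact hdoob.trans (ENNReal.ofReal_le_ofReal hfirst)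

theorem ae_eventually_abs_sum_dyadic_lt [IsProbabilityMeasure P] (hmeas : ∀ i, Measurable (X i))
    (hindep : iIndepFun X P) (hident : ∀ i, IdentDistrib (X i) (X 0) P P)
    (hL2 : MemLp (X 0) 2 P) (hmean : P[X 0] = 0) {a : ℝ} (ha : 1 / 2 < a) :
    ∀ᵐ ω ∂P, ∀ᶠ K in atTop, ∀ k ≤ 2 ^ (K + 1),
      |∑ i ∈ range (k + 1), X i ω| < ((2 : ℝ) ^ a) ^ K := by
  set v := variance (X 0) P
  have hv : 0 ≤ v := variance_nonneg _ _
  set r := √2 / 2 ^ a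
  have hr : r < 1 := by
    rw [div_lt_one (by positivity), Real.sqrt_eq_rpow]
    exact Real.rpow_lt_rpow_of_exponent_lt one_lt_two ha
  set s : ℕ → Set Ω := fun K => {ω | ((2 : ℝ) ^ a) ^ K ≤ (range (2 ^ (K + 1) + 1)).sup'
    nonempty_range_add_one fun k => |∑ i ∈ range (k + 1), X i ω|}
  have hs : ∀ K, P (s K) ≤ ENNReal.ofReal (2 * √v * r ^ K) := by
    intro K
    refine (measure_le_sup_abs_sum_le hmeas hindep hident hL2 hmean (by positivity) _).trans
      (ENNReal.ofReal_le_ofReal ?_)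
    have hsqrt : √((↑(2 ^ (K + 1)) + 1) * v) ≤ 2 * √2 ^ K * √v := by
      rw [Real.sqrt_le_iff]
      refine ⟨by positivity, ?_⟩
      rw [mul_pow, mul_pow, Real.sq_sqrt hv, ← pow_mul, mul_comm K,
        pow_mul, Real.sq_sqrt zero_le_two]
      gcongr
      linarith [one_le_pow₀ (M₀ := ℝ) one_le_two (n := K), pow_succ (2 : ℝ) K]
    calc _ ≤ 2 * √2 ^ K * √v / (2 ^ a) ^ K := by gcongr; exact_mod_cast hsqrt
      _ = 2 * √v * r ^ K := by rw [div_pow]; ring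
  have hsum : ∑' K, P (s K) ≠ ⊤ := by
    refine ne_top_of_le_ne_top ?_ (ENNReal.tsum_le_tsum hs)
    rw [← ENNReal.ofReal_tsum_of_nonneg (fun K => by positivity)
      ((summable_geometric_of_lt_one (by positivity) hr).mul_left _)]
    exact ENNReal.ofReal_ne_top
  filter_upwards [ae_eventually_notMem hsum] with ω hω
  filter_upwards [hω] with K hK k hk
  simp only [s, Set.mem_ofPred_eq, not_le, sup'_lt_iff] at hK
  exact hK k (mem_range.mpr (Nat.lt_succ_of_le hk))

theorem ae_eventually_abs_sum_range_le [IsProbabilityMeasure P] (hmeas : ∀ i, Measurable (X i))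
    (hindep : iIndepFun X P) (hident : ∀ i, IdentDistrib (X i) (X 0) P P)
    (hL2 : MemLp (X 0) 2 P) (hmean : P[X 0] = 0) {a : ℝ} (ha : 1 / 2 < a) :
    ∀ᵐ ω ∂P, ∀ᶠ n in atTop, ∀ k ≤ n, |∑ i ∈ range k, X i ω| ≤ (n : ℝ) ^ a := by
  filter_upwards [ae_eventually_abs_sum_dyadic_lt hmeas hindep hident hL2 hmean ha] with ω hω
  obtain ⟨K₀, hK₀⟩ := eventually_atTop.mp hω
  refine eventually_atTop.mpr ⟨2 ^ K₀, fun n hn k hk => ?_⟩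
  have hn0 : n ≠ 0 := by have := Nat.one_le_two_pow (n := K₀); omega
  set K := Nat.log 2 n
  have hKn : 2 ^ K ≤ n := Nat.pow_log_le_self 2 hn0
  have hdyadic : ((2 : ℝ) ^ a) ^ K ≤ (n : ℝ) ^ a := by
    rw [← Real.rpow_natCast, ← Real.rpow_mul zero_le_two, mul_comm, Real.rpow_mul zero_le_two,
      Real.rpow_natCast]
    exact Real.rpow_le_rpow (by positivity) (by exact_mod_cast hKn) (by linarith)
  rcases k with _ | j
  · simpa using Real.rpow_nonneg n.cast_nonneg a
  · have hj : j ≤ 2 ^ (K + 1) := (Nat.lt_pow_succ_log_self one_lt_two n).le.trans' (by omega)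
    have hK : K₀ ≤ K := (Nat.le_log_iff_pow_le one_lt_two hn0).mpr hn
    exact ((hK₀ K hK j hj).trans_le hdyadic).le

theorem ae_eventually_norm_sum_range_le {E : Type*} [NormedAddCommGroup E] [InnerProductSpace ℝ E]
    [FiniteDimensional ℝ E] [MeasurableSpace E] [BorelSpace E] [IsProbabilityMeasure P]
    {Y : ℕ → Ω → E} (hmeas : ∀ i, Measurable (Y i)) (hindep : iIndepFun Y P)
    (hident : ∀ i, IdentDistrib (Y i) (Y 0) P P) (hL2 : MemLp (Y 0) 2 P) (hmean : P[Y 0] = 0)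
    {a : ℝ} (ha : 1 / 2 < a) :
    ∀ᵐ ω ∂P, ∀ᶠ n in atTop, ∀ k ≤ n,
      ‖∑ i ∈ range k, Y i ω‖ ≤ Module.finrank ℝ E * (n : ℝ) ^ a := by
  set b := stdOrthonormalBasis ℝ E
  have hcoord : ∀ c, ∀ᵐ ω ∂P, ∀ᶠ n in atTop, ∀ k ≤ n,
      |∑ i ∈ range k, ⟪b c, Y i ω⟫| ≤ (n : ℝ) ^ a := by
    intro c
    set L := innerSL ℝ (b c)
    have hL : Measurable L := L.continuous.measurable
    refine ae_eventually_abs_sum_range_le (X := fun i ω => L (Y i ω))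
      (fun i => hL.comp (hmeas i)) (hindep.comp _ fun _ => hL) (fun i => (hident i).comp hL)
      (L.comp_memLp' hL2) ?_ ha
    rw [L.integral_comp_comm (hL2.integrable one_le_two), hmean, map_zero]
  filter_upwards [ae_all_iff.mpr hcoord] with ω hω
  filter_upwards [eventually_all.mpr hω] with n hn k hk
  calc ‖∑ i ∈ range k, Y i ω‖
      = ‖∑ c, ⟪b c, ∑ i ∈ range k, Y i ω⟫ • b c‖ := by rw [b.sum_repr']
    _ ≤ ∑ c, |∑ i ∈ range k, ⟪b c, Y i ω⟫| := by
      refine (norm_sum_le _ _).trans_eq (sum_congr rfl fun c _ => ?_)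
      rw [norm_smul, b.norm_eq_one, mul_one, inner_sum, Real.norm_eq_abs]
    _ ≤ ∑ c : Fin (Module.finrank ℝ E), (n : ℝ) ^ a := sum_le_sum fun c _ => hn c k hk
    _ = Module.finrank ℝ E * (n : ℝ) ^ a := by simp

end ProbabilityTheory

theorem Metric.diam_image_eq_sSup_of_dominated {α ι : Type*} [PseudoMetricSpace α] {f : ι → α}
    {s : Set ι} (hs : Bornology.IsBounded (f '' s)) {p : ι → ι → Prop}
    (hp : ∀ i j, p i j → i ∈ s ∧ j ∈ s)
    (hdom : ∀ i ∈ s, ∀ j ∈ s, ∃ i' j', p i' j' ∧ dist (f i) (f j) ≤ dist (f i') (f j')) :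
    diam (f '' s) = sSup {d | ∃ i j, p i j ∧ d = dist (f i) (f j)} := by
  have hle : ∀ d ∈ {d | ∃ i j, p i j ∧ d = dist (f i) (f j)}, d ≤ diam (f '' s) := by
    rintro _ ⟨i, j, hij, rfl⟩
    exact dist_le_diam_of_mem hs ⟨i, (hp i j hij).1, rfl⟩ ⟨j, (hp i j hij).2, rfl⟩
  refine le_antisymm ?_ (Real.sSup_le hle diam_nonneg)
  refine diam_le_of_forall_dist_le (Real.sSup_nonneg ?_) ?_
  · rintro _ ⟨i, j, -, rfl⟩
    exact dist_nonneg
  · rintro _ ⟨i, hi, rfl⟩ _ ⟨j, hj, rfl⟩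
    obtain ⟨i', j', hij', hdist⟩ := hdom i hi j hj
    exact hdist.trans (le_csSup ⟨_, hle⟩ ⟨i', j', hij', rfl⟩)

section Drift

variable {E : Type*} [NormedAddCommGroup E] [InnerProductSpace ℝ E] {x : ℕ → E} {μ : E}

theorem norm_sub_sq_eq_of_inner_sub_smul_eq_zero (horth : ∀ k, ⟪x k - (k : ℝ) • μ, μ⟫ = 0)
    (i j : ℕ) : ‖x j - x i‖ ^ 2
      = ((j : ℝ) - i) ^ 2 * ‖μ‖ ^ 2 + ‖(x j - (j : ℝ) • μ) - (x i - (i : ℝ) • μ)‖ ^ 2 := by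
  have hsplit : x j - x i = ((j : ℝ) - i) • μ + ((x j - (j : ℝ) • μ) - (x i - (i : ℝ) • μ)) := by
    rw [sub_smul]; abel
  have hperp : ⟪((j : ℝ) - i) • μ, (x j - (j : ℝ) • μ) - (x i - (i : ℝ) • μ)⟫ = 0 := by
    rw [real_inner_smul_left, inner_sub_right, real_inner_comm, horth j, real_inner_comm, horth i,
      sub_zero, mul_zero]
  simp only [hsplit, sq]
  rw [norm_add_sq_eq_norm_sq_add_norm_sq_real hperp, norm_smul, Real.norm_eq_abs,
    mul_mul_mul_comm, abs_mul_abs_self]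

theorem dist_le_dist_zero_of_sub_le (horth : ∀ k, ⟪x k - (k : ℝ) • μ, μ⟫ = 0) {n : ℕ} {q B : ℝ}
    (hq : 0 ≤ q) (hB : ∀ k ≤ n, ‖x k - (k : ℝ) • μ‖ ≤ B)
    (hgrowth : 4 * B ^ 2 ≤ ‖μ‖ ^ 2 * (n * q)) {i j : ℕ} (hij : i ≤ j) (hjn : j ≤ n)
    (hji : (j : ℝ) - i ≤ n - q) : dist (x i) (x j) ≤ dist (x 0) (x n) := by
  have hfluct : ‖(x j - (j : ℝ) • μ) - (x i - (i : ℝ) • μ)‖ ≤ 2 * B :=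
    (norm_sub_le _ _).trans (by linarith [hB j hjn, hB i (hij.trans hjn)])
  have hij' : (i : ℝ) ≤ j := by exact_mod_cast hij
  have hdrift : ((j : ℝ) - i) ^ 2 * ‖μ‖ ^ 2 ≤ ((n : ℝ) - q) ^ 2 * ‖μ‖ ^ 2 := by
    gcongr
  have hslack : 0 ≤ ‖μ‖ ^ 2 * (q * ((n : ℝ) - q)) := by
    have := sq_nonneg ‖μ‖
    have : 0 ≤ (n : ℝ) - q := by linarith
    positivity
  have hsq := norm_sub_sq_eq_of_inner_sub_smul_eq_zero horth
  rw [dist_comm, dist_comm (x 0), dist_eq_norm, dist_eq_norm, ← sq_le_sq₀ (norm_nonneg _)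
    (norm_nonneg _), hsq, hsq, Nat.cast_zero]
  nlinarith [pow_le_pow_left₀ (norm_nonneg _) hfluct 2]

theorem diam_image_Iic_eq_sSup_of_inner_sub_smul_eq_zero
    (horth : ∀ k, ⟪x k - (k : ℝ) • μ, μ⟫ = 0) {n : ℕ} {q B : ℝ} (hq : 0 ≤ q) (hqn : q ≤ n)
    (hB : ∀ k ≤ n, ‖x k - (k : ℝ) • μ‖ ≤ B) (hgrowth : 4 * B ^ 2 ≤ ‖μ‖ ^ 2 * (n * q)) :
    Metric.diam (x '' Set.Iic n) = sSup {d | ∃ i j : ℕ, (i : ℝ) ≤ q ∧ (n : ℝ) - q ≤ j ∧ j ≤ n ∧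
      d = dist (x i) (x j)} := by
  have hdom : ∀ i j, i ≤ j → j ≤ n → ∃ i' j' : ℕ, ((i' : ℝ) ≤ q ∧ (n : ℝ) - q ≤ j' ∧ j' ≤ n) ∧
      dist (x i) (x j) ≤ dist (x i') (x j') := by
    intro i j hij hjn
    by_cases hnear : (i : ℝ) ≤ q ∧ (n : ℝ) - q ≤ j
    · exact ⟨i, j, ⟨hnear.1, hnear.2, hjn⟩, le_rfl⟩
    refine ⟨0, n, ⟨by simpa using hq, by linarith, le_rfl⟩,
      dist_le_dist_zero_of_sub_le horth hq hB hgrowth hij hjn ?_⟩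
    have : (j : ℝ) ≤ n := by exact_mod_cast hjn
    rw [not_and_or, not_le, not_le] at hnear
    rcases hnear with h | h <;> linarith [(Nat.cast_nonneg i : (0 : ℝ) ≤ i)]
  have := Metric.diam_image_eq_sSup_of_dominated ((Set.finite_Iic n).image x).isBounded
    (p := fun i j : ℕ => (i : ℝ) ≤ q ∧ (n : ℝ) - q ≤ j ∧ j ≤ n)
    (fun i j hij => ⟨by exact_mod_cast hij.1.trans hqn, hij.2.2⟩) fun i hi j hj => ?_
  · simpa only [and_assoc] using this
  rcases le_total i j with hij | hji
  · exact hdom i j hij hj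
  · rw [dist_comm]; exact hdom j i hji hi

theorem inner_sub_self_eq_zero_of_inner_inv_norm_smul_eq {z μ : E} (h : ⟪z, ‖μ‖⁻¹ • μ⟫ = ‖μ‖) :
    ⟪z - μ, μ⟫ = 0 := by
  rcases eq_or_ne μ 0 with rfl | hμ
  · exact inner_zero_right _
  rw [real_inner_smul_right, inv_mul_eq_iff_eq_mul₀ (norm_ne_zero_iff.mpr hμ)] at h
  rw [inner_sub_left, h, real_inner_self_eq_norm_sq, sq, sub_self]

end Drift

theorem eventually_four_mul_sq_mul_rpow_le {a b m : ℝ} (C : ℝ) (hm : 0 < m) (hab : 2 * a < 1 + b) :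
    ∀ᶠ n : ℕ in atTop, 4 * (C * (n : ℝ) ^ a) ^ 2 ≤ m ^ 2 * (n * (n : ℝ) ^ b) := by
  have hlarge : ∀ᶠ n : ℕ in atTop, 4 * C ^ 2 / m ^ 2 ≤ (n : ℝ) ^ (1 + b - 2 * a) :=
    ((tendsto_rpow_atTop (by linarith)).comp tendsto_natCast_atTop_atTop).eventually_ge_atTop _
  filter_upwards [hlarge, eventually_gt_atTop 0] with n hn hn0
  have hn0 : (0 : ℝ) < n := by exact_mod_cast hn0
  rw [div_le_iff₀ (by positivity)] at hn
  calc 4 * (C * (n : ℝ) ^ a) ^ 2 = 4 * C ^ 2 * (n : ℝ) ^ (2 * a) := by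
        rw [mul_comm 2 a, Real.rpow_mul hn0.le, Real.rpow_two]; ring
    _ ≤ (n : ℝ) ^ (1 + b - 2 * a) * m ^ 2 * (n : ℝ) ^ (2 * a) := by gcongr
    _ = m ^ 2 * (n * (n : ℝ) ^ b) := by
        rw [mul_right_comm, ← Real.rpow_add hn0, sub_add_cancel, Real.rpow_add hn0,
          Real.rpow_one, mul_comm]

/-- In the degenerate-drift case (`Z·û = ‖μ‖` a.s.), for any `β ∈ (0,1)`, almost
surely, for all but finitely many `n` the diameter of the walk up to time `n` is
attained by a pair of points with indices `i ≤ n^β` and `n − n^β ≤ j ≤ n`. -/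
theorem diameter_attained_near_endpoints
    {Ω : Type*} [MeasureSpace Ω] [IsProbabilityMeasure (ℙ : Measure Ω)]
    (Z : ℕ → Ω → EuclideanSpace ℝ (Fin 2))
    (hmeas : ∀ i, Measurable (Z i))
    (hindep : iIndepFun Z ℙ)
    (hident : ∀ i, IdentDistrib (Z i) (Z 0) ℙ ℙ)
    (hL2 : MemLp (Z 0) 2 ℙ)
    (μ : EuclideanSpace ℝ (Fin 2)) (hμ : μ = ∫ ω, Z 0 ω) (hμ0 : μ ≠ 0)
    (hdegen : ∀ i, ∀ᵐ ω ∂(ℙ : Measure Ω), ⟪Z i ω, ‖μ‖⁻¹ • μ⟫ = ‖μ‖)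
    (β : ℝ) (hβ : β ∈ Set.Ioo (0 : ℝ) 1)
    (S : ℕ → Ω → EuclideanSpace ℝ (Fin 2))
    (hS : ∀ n ω, S n ω = ∑ i ∈ Finset.range n, Z i ω) :
    ∀ᵐ ω ∂(ℙ : Measure Ω), ∀ᶠ n : ℕ in atTop,
      Metric.diam ((fun k => S k ω) '' Set.Iic n) =
        sSup {d : ℝ | ∃ i j : ℕ, (i : ℝ) ≤ (n : ℝ) ^ β ∧
          (n : ℝ) - (n : ℝ) ^ β ≤ (j : ℝ) ∧ j ≤ n ∧
          d = dist (S i ω) (S j ω)} := by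
  obtain ⟨hβ0, hβ1⟩ := hβ
  obtain ⟨a, ha, haβ⟩ : ∃ a : ℝ, 1 / 2 < a ∧ 2 * a < 1 + β :=
    ⟨1 / 2 + β / 4, by linarith, by linarith⟩
  have hcentered_sum : ∀ k ω, ∑ i ∈ range k, (Z i ω - μ) = S k ω - (k : ℝ) • μ := fun k ω => by
    rw [sum_sub_distrib, sum_const, card_range, Nat.cast_smul_eq_nsmul, hS]
  have hcentered : ∀ᵐ ω ∂(ℙ : Measure Ω), ∀ᶠ n in atTop, ∀ k ≤ n,
      ‖S k ω - (k : ℝ) • μ‖ ≤ 2 * (n : ℝ) ^ a := by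
    have hsub : Measurable fun v : EuclideanSpace ℝ (Fin 2) => v - μ := measurable_id.sub_const μ
    have := ae_eventually_norm_sum_range_le (fun i => (hmeas i).sub_const μ)
      (hindep.comp _ fun _ => hsub) (fun i => (hident i).comp hsub) (hL2.sub (memLp_const μ))
      (by rw [integral_sub (hL2.integrable one_le_two) (integrable_const μ), ← hμ]; simp) ha
    simpa [hcentered_sum] using this
  have horth : ∀ᵐ ω ∂(ℙ : Measure Ω), ∀ k, ⟪S k ω - (k : ℝ) • μ, μ⟫ = 0 := by
    filter_upwards [ae_all_iff.mpr hdegen] with ω hω k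
    rw [← hcentered_sum, sum_inner]
    exact sum_eq_zero fun i _ => inner_sub_self_eq_zero_of_inner_inv_norm_smul_eq (hω i)
  filter_upwards [hcentered, horth] with ω hB hω
  filter_upwards [hB, eventually_four_mul_sq_mul_rpow_le 2 (norm_pos_iff.mpr hμ0) haβ,
    eventually_ge_atTop 1] with n hBn hgrowth hn
  exact diam_image_Iic_eq_sSup_of_inner_sub_smul_eq_zero hω (by positivity)
    (Real.rpow_le_self_of_one_le (by exact_mod_cast hn) hβ1.le) hBn hgrowth
end
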